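/- Let E = ℝⁿ, let 0 ≤ L < 1, and let G : E → E be L-Lipschitz. Suppose (x₁, y₁) and (x₂, y₂) in E × E satisfy x₁ − y₁ = G(x₁ + y₁) and x₂ − y₂ = G(x₂ + y₂). Then ⟪y₁ − y₂, x₁ − x₂⟫ ≥ ((1 − L)/(1 + L))‖x₁ − x₂‖². In particular, the monotone formulation of G is ((1 − L)/(1 + L))-strongly monotone. -/

import Mathlib

/-!
Put `u = x₁ - x₂`, `v = y₁ - y₂`. The Lipschitz bound on `G` says `‖u - v‖ ≤ L ‖u + v‖`.
With `A = ‖u + v‖` and `B = ‖u - v‖`, polarization gives `4 ⟪v, u⟫ = A² - B²` and the triangle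
inequality gives `2 ‖u‖ ≤ A + B`, so
`4 ((1 + L) ⟪v, u⟫ - (1 - L) ‖u‖²) ≥ (A + B) ((1 + L) (A - B) - (1 - L) (A + B))`
`= 2 (A + B) (L A - B) ≥ 0`.
-/

open RealInnerProductSpace

theorem norm_sub_le_mul_norm_add_of_cayley {E : Type*} [SeminormedAddCommGroup E] {L : ℝ}
    {G : E → E} (hG : ∀ x y, ‖G x - G y‖ ≤ L * ‖x - y‖) {x₁ y₁ x₂ y₂ : E}
    (h₁ : x₁ - y₁ = G (x₁ + y₁)) (h₂ : x₂ - y₂ = G (x₂ + y₂)) :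
    ‖(x₁ - x₂) - (y₁ - y₂)‖ ≤ L * ‖(x₁ - x₂) + (y₁ - y₂)‖ := by
  have hsub : (x₁ - x₂) - (y₁ - y₂) = (x₁ - y₁) - (x₂ - y₂) := by abel
  have hadd : (x₁ - x₂) + (y₁ - y₂) = (x₁ + y₁) - (x₂ + y₂) := by abel
  rw [hsub, hadd, h₁, h₂]
  exact hG _ _

theorem sub_mul_norm_sq_le_add_mul_inner_of_norm_sub_le {E : Type*}
    [SeminormedAddCommGroup E] [InnerProductSpace ℝ E] {L : ℝ} (hL : L ≤ 1) {u v : E}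
    (h : ‖u - v‖ ≤ L * ‖u + v‖) :
    (1 - L) * ‖u‖ ^ 2 ≤ (1 + L) * ⟪v, u⟫ := by
  have hpolar : 4 * ⟪v, u⟫ = ‖u + v‖ ^ 2 - ‖u - v‖ ^ 2 := by
    rw [norm_add_sq_real, norm_sub_sq_real, real_inner_comm]
    ring
  have htwo : 2 * ‖u‖ ≤ ‖u + v‖ + ‖u - v‖ := by
    calc 2 * ‖u‖ = ‖(u + v) + (u - v)‖ := by
          rw [show (u + v) + (u - v) = (2 : ℝ) • u by rw [two_smul]; abel, norm_smul,
            Real.norm_two]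
      _ ≤ ‖u + v‖ + ‖u - v‖ := norm_add_le _ _
  have hsq : 4 * ‖u‖ ^ 2 ≤ (‖u + v‖ + ‖u - v‖) ^ 2 := by
    nlinarith [norm_nonneg u]
  nlinarith [mul_nonneg (add_nonneg (norm_nonneg (u + v)) (norm_nonneg (u - v)))
    (sub_nonneg.2 h), mul_le_mul_of_nonneg_left hsq (sub_nonneg.2 hL)]

theorem monotone_formulation_strongly_monotone
    (n : ℕ) (L : ℝ) (hL0 : 0 ≤ L) (hL1 : L < 1)
    (G : EuclideanSpace ℝ (Fin n) → EuclideanSpace ℝ (Fin n))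
    (hG : ∀ x y, ‖G x - G y‖ ≤ L * ‖x - y‖)
    (x₁ y₁ x₂ y₂ : EuclideanSpace ℝ (Fin n))
    (h₁ : x₁ - y₁ = G (x₁ + y₁)) (h₂ : x₂ - y₂ = G (x₂ + y₂)) :
    ⟪y₁ - y₂, x₁ - x₂⟫ ≥ ((1 - L) / (1 + L)) * ‖x₁ - x₂‖ ^ 2 := by
  have hbound := sub_mul_norm_sq_le_add_mul_inner_of_norm_sub_le hL1.le
    (norm_sub_le_mul_norm_add_of_cayley hG h₁ h₂)
  rw [ge_iff_le, div_mul_eq_mul_div, div_le_iff₀ (by linarith)]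
  linarith
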